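/- Fix γ ∈ ℂ and let A_γ be the type (iii) algebra with parameter γ. Then the set {t ∈ A_γ : L_aᵏ(t) = 0 for some k ∈ ℕ} equals the one-dimensional span of a + γa² − a³, and a·(a + γa² − a³) = 0 (so the left normalizer of this subspace in A_γ is all of A_γ). -/
import Mathlib

/-- `lpow μ x k` is the left-normed power `x^(k+1)`; so `lpow μ x 0 = x`,
`lpow μ x 1 = x·x = x²`, `lpow μ x 2 = x·x² = x³`, etc. -/
def lpow {A : Type*} [AddCommGroup A] [Module ℂ A]
    (μ : A →ₗ[ℂ] A →ₗ[ℂ] A) (x : A) : ℕ → A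
  | 0 => x
  | n + 1 => μ x (lpow μ x n)

/-- The 3-dimensional cyclic Leibniz algebra of type (iii) with parameter γ:
A_γ = ℂ³ with basis a = e₀, a² = e₁, a³ = e₂ and multiplication u·v = u₀ • L_a(v),
where L_a(a) = a², L_a(a²) = a³, L_a(a³) = a² + γa³ (so a²·v = a³·v = 0). -/
noncomputable def mulIII (γ : ℂ) : (Fin 3 → ℂ) →ₗ[ℂ] (Fin 3 → ℂ) →ₗ[ℂ] (Fin 3 → ℂ) :=
  (LinearMap.proj 0).smulRight (Matrix.mulVecLin !![0,0,0;1,0,1;0,1,γ])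

noncomputable def a : Fin 3 → ℂ := ![1,0,0]
noncomputable def a2 : Fin 3 → ℂ := ![0,1,0]
noncomputable def a3 : Fin 3 → ℂ := ![0,0,1]

lemma mul_a (γ : ℂ) (v : Fin 3 → ℂ) :
    mulIII γ a v = ![0, v 0 + v 2, v 1 + γ * v 2] := by
  funext i
  fin_cases i <;>
    simp [mulIII, a, Matrix.mulVecLin, Matrix.mulVec, dotProduct,
      Fin.sum_univ_succ]

/-- ker M² = ker M -/
lemma ker_sq (γ : ℂ) (t : Fin 3 → ℂ) (h : mulIII γ a (mulIII γ a t) = 0) :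
    mulIII γ a t = 0 := by
  rw [mul_a, mul_a] at h
  have h1 := congrFun h 1
  have h2 := congrFun h 2
  simp at h1 h2
  have e0 : t 0 + t 2 = 0 := by linear_combination h2 - γ * h1
  rw [mul_a]
  funext i
  fin_cases i
  · simp
  · simpa using e0
  · simpa using h1

lemma ker_pow (γ : ℂ) : ∀ (k : ℕ) (t : Fin 3 → ℂ),
    (mulIII γ a ^ k) t = 0 → mulIII γ a t = 0 ∨ t = 0 := by
  intro k
  induction k with
  | zero => intro t h; right; simpa using h
  | succ n ih =>
    intro t h
    rw [pow_succ, Module.End.mul_apply] at h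
    rcases ih _ h with h' | h'
    · exact Or.inl (ker_sq γ t h')
    · exact Or.inl h'

/-- In the type (iii) algebra A_γ, {t : L_aᵏ(t) = 0 for some k} equals
the one-dimensional span of a + γa² − a³, and a·(a + γa² − a³) = 0 (so the left
normalizer of this subspace in A_γ is all of A_γ). -/
theorem typeIII_fitting_null_component (γ : ℂ) :
    ({t : Fin 3 → ℂ | ∃ k : ℕ, (mulIII γ a ^ k) t = 0} =
        ↑(Submodule.span ℂ ({a + γ • a2 - a3} : Set (Fin 3 → ℂ)))) ∧
    a + γ • a2 - a3 ≠ 0 ∧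
    mulIII γ a (a + γ • a2 - a3) = 0 := by
  have hw : mulIII γ a (a + γ • a2 - a3) = 0 := by
    rw [mul_a]
    funext i
    fin_cases i <;> simp [a, a2, a3] <;> ring
  refine ⟨?_, ?_, hw⟩
  · ext t
    simp only [Set.mem_setOf_eq, SetLike.mem_coe, Submodule.mem_span_singleton]
    constructor
    · rintro ⟨k, hk⟩
      rcases ker_pow γ k t hk with h | h
      · rw [mul_a] at h
        have h1 := congrFun h 1
        have h2 := congrFun h 2
        simp at h1 h2
        have e2 : t 2 = -t 0 := by linear_combination h1
        have e1 : t 1 = γ * t 0 := by linear_combination h2 - γ * h1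
        refine ⟨t 0, ?_⟩
        funext i
        fin_cases i <;> simp [a, a2, a3, e1, e2] <;> ring
      · exact ⟨0, by simp [h]⟩
    · rintro ⟨c, rfl⟩
      refine ⟨1, ?_⟩
      simp [hw]
  · intro h
    have h0 := congrFun h 0
    simp [a, a2, a3] at h0
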